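/- arXiv:2403.08303 — 4 statements merged into one kernel-verified Lean document; each statement's English description precedes it below -/
import Mathlib

section
/- Let 0 ≤ ℓ ≤ k be integers, let u, n be positive integers, and let 0 < ε ≤ 1 be a real number such that (1−ε)^ℓ·n ≤ u. Suppose G is a graph on n vertices such that every vertex subset S with |S| ≥ u contains a vertex whose degree in the induced subgraph G[S] is at least ε·|S| − 1. Then the number of independent sets of size k in G is at most C(n,ℓ)·C(u,k−ℓ), where C(a,b) denotes the binomial coefficient. -/
/-!
Induct on the vertex set `A` in which the independent sets are counted. If `|A| ≤ u` the bound
is the crude `C(|A|, k) ≤ C(|A|, ℓ) C(u, k - ℓ)`. Otherwise `ℓ ≥ 1` and some `v ∈ A` has degree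
`d ≥ ε|A| - 1` in `G[A]`. An independent set avoiding `v` lives in `A - v`, which has
`(1 - ε)^(ℓ + 1) (|A| - 1) ≤ u`; one containing `v` is `v` plus an independent set in
`A - N[v]`, which has at most `(1 - ε)|A|` vertices, so the parameter drops to `ℓ - 1`.
Pascal's rule adds the two bounds up.
-/

/-- The degree of `v` in the induced subgraph `G[S]`: the number of vertices of `S`
adjacent to `v`. -/
noncomputable def degreeOn {V : Type} (G : SimpleGraph V) (S : Finset V) (v : V) : ℕ :=
  Nat.card {w : V // w ∈ S ∧ G.Adj v w}

/-- `S` is an independent set of `G`. -/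
def IsIndepOn {V : Type} (G : SimpleGraph V) (S : Finset V) : Prop :=
  ∀ u ∈ S, ∀ v ∈ S, ¬G.Adj u v

open Finset

theorem Nat.choose_le_choose_mul_choose {m u ℓ k : ℕ} (hmu : m ≤ u) (hℓk : ℓ ≤ k) :
    m.choose k ≤ m.choose ℓ * u.choose (k - ℓ) :=
  calc m.choose k ≤ m.choose k * k.choose ℓ := Nat.le_mul_of_pos_right _ (Nat.choose_pos hℓk)
    _ = m.choose ℓ * (m - ℓ).choose (k - ℓ) := Nat.choose_mul hℓk
    _ ≤ m.choose ℓ * u.choose (k - ℓ) :=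
      Nat.mul_le_mul_left _ (Nat.choose_le_choose _ (by omega))

theorem Nat.choose_mul_add_choose_mul_le {m a ℓ x : ℕ} (hm : 0 < m) (ha : a ≤ m - 1) :
    (m - 1).choose (ℓ + 1) * x + a.choose ℓ * x ≤ m.choose (ℓ + 1) * x := by
  obtain ⟨m, rfl⟩ : ∃ m', m = m' + 1 := ⟨m - 1, by omega⟩
  rw [Nat.add_sub_cancel] at ha ⊢
  rw [← Nat.add_mul, Nat.choose_succ_succ, add_comm]
  exact Nat.mul_le_mul_right _ (Nat.add_le_add_right (Nat.choose_le_choose _ ha) _)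

section IndepSets

variable {V : Type} (G : SimpleGraph V)

instance [DecidableRel G.Adj] : DecidablePred (IsIndepOn G) :=
  fun S => inferInstanceAs (Decidable (∀ u ∈ S, ∀ v ∈ S, ¬G.Adj u v))

theorem IsIndepOn.mono {G : SimpleGraph V} {S T : Finset V} (hT : IsIndepOn G T) (hST : S ⊆ T) :
    IsIndepOn G S :=
  fun x hx y hy => hT x (hST hx) y (hST hy)

theorem degreeOn_eq_card_filter (S : Finset V) (v : V) [DecidablePred (G.Adj v)] :
    degreeOn G S v = #{w ∈ S | G.Adj v w} := by
  rw [degreeOn, ← Nat.card_eq_finsetCard]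
  congr
  ext
  simp

variable [DecidableEq V] [DecidableRel G.Adj]

def indepSetsIn (A : Finset V) (k : ℕ) : Finset (Finset V) :=
  {S ∈ A.powersetCard k | IsIndepOn G S}

omit [DecidableEq V] in
theorem mem_indepSetsIn {A S : Finset V} {k : ℕ} :
    S ∈ indepSetsIn G A k ↔ S ⊆ A ∧ #S = k ∧ IsIndepOn G S := by
  simp [indepSetsIn, mem_powersetCard, and_assoc]

omit [DecidableEq V] in
theorem card_indepSetsIn_le_choose (A : Finset V) (k : ℕ) :
    #(indepSetsIn G A k) ≤ (#A).choose k :=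
  (card_filter_le _ _).trans (card_powersetCard k A).le

def nonNbrsIn (A : Finset V) (v : V) : Finset V :=
  {w ∈ A | ¬G.Adj v w}.erase v

theorem card_nonNbrsIn_add_degreeOn {A : Finset V} {v : V} (hv : v ∈ A) :
    #(nonNbrsIn G A v) + degreeOn G A v + 1 = #A := by
  have hvmem : v ∈ ({w ∈ A | ¬G.Adj v w} : Finset V) := by simpa using hv
  rw [nonNbrsIn, card_erase_of_mem hvmem, degreeOn_eq_card_filter,
    ← card_filter_add_card_filter_not (fun w => G.Adj v w) (s := A)]
  have := card_pos.2 ⟨v, hvmem⟩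
  omega

theorem indepSetsIn_subset_union (A : Finset V) (k : ℕ) (v : V) :
    indepSetsIn G A k ⊆
      indepSetsIn G (A.erase v) k ∪
        (indepSetsIn G (nonNbrsIn G A v) (k - 1)).image (insert v) := by
  intro S hS
  obtain ⟨hSA, hSk, hSind⟩ := (mem_indepSetsIn G).1 hS
  rw [mem_union, mem_image]
  by_cases hv : v ∈ S
  · refine Or.inr ⟨S.erase v, (mem_indepSetsIn G).2 ⟨?_, ?_, hSind.mono (erase_subset v S)⟩,
      insert_erase hv⟩
    · intro w hw
      obtain ⟨hwv, hwS⟩ := mem_erase.1 hw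
      simp [nonNbrsIn, hwv, hSA hwS, hSind v hv w hwS]
    · rw [card_erase_of_mem hv, hSk]
  · refine Or.inl ((mem_indepSetsIn G).2 ⟨fun w hw => ?_, hSk, hSind⟩)
    exact mem_erase.2 ⟨ne_of_mem_of_not_mem hw hv, hSA hw⟩

theorem card_indepSetsIn_le_add (A : Finset V) (k : ℕ) (v : V) :
    #(indepSetsIn G A k) ≤
      #(indepSetsIn G (A.erase v) k) + #(indepSetsIn G (nonNbrsIn G A v) (k - 1)) :=
  (card_le_card (indepSetsIn_subset_union G A k v)).trans
    ((card_union_le _ _).trans (Nat.add_le_add_left card_image_le _))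

theorem card_indepSetsIn_le {u : ℕ} {ε : ℝ} (hε : ε ≤ 1)
    (hdeg : ∀ S : Finset V, u ≤ #S → ∃ v ∈ S, ε * (#S : ℝ) - 1 ≤ (degreeOn G S v : ℝ))
    (A : Finset V) {ℓ k : ℕ} (hℓk : ℓ ≤ k) (hA : (1 - ε) ^ ℓ * (#A : ℝ) ≤ u) :
    #(indepSetsIn G A k) ≤ (#A).choose ℓ * u.choose (k - ℓ) := by
  induction A using Finset.strongInduction generalizing ℓ k with
  | H A ih =>
  by_cases hAu : #A ≤ u
  · exact (card_indepSetsIn_le_choose G A k).trans (Nat.choose_le_choose_mul_choose hAu hℓk)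
  obtain _ | ℓ := ℓ
  · rw [pow_zero, one_mul] at hA
    exact absurd (by exact_mod_cast hA) hAu
  obtain ⟨v, hvA, hvdeg⟩ := hdeg A (by omega)
  have hcard := card_nonNbrsIn_add_degreeOn G hvA
  have hcardℝ : (#(nonNbrsIn G A v) : ℝ) + degreeOn G A v + 1 = #A := by exact_mod_cast hcard
  have hε' : 0 ≤ 1 - ε := by linarith
  have hnonNbrs : (1 - ε) ^ ℓ * (#(nonNbrsIn G A v) : ℝ) ≤ u :=
    calc (1 - ε) ^ ℓ * (#(nonNbrsIn G A v) : ℝ) ≤ (1 - ε) ^ ℓ * ((1 - ε) * #A) :=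
          mul_le_mul_of_nonneg_left (by linarith) (pow_nonneg hε' ℓ)
      _ = (1 - ε) ^ (ℓ + 1) * #A := by ring
      _ ≤ u := hA
  have herase : (1 - ε) ^ (ℓ + 1) * (#(A.erase v) : ℝ) ≤ u := by
    refine le_trans (mul_le_mul_of_nonneg_left ?_ (pow_nonneg hε' _)) hA
    exact_mod_cast card_erase_le
  have hsub : nonNbrsIn G A v ⊂ A :=
    (erase_subset_erase v (filter_subset _ A)).trans_ssubset (erase_ssubset hvA)
  calc #(indepSetsIn G A k)
      ≤ #(indepSetsIn G (A.erase v) k) + #(indepSetsIn G (nonNbrsIn G A v) (k - 1)) :=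
        card_indepSetsIn_le_add G A k v
    _ ≤ (#A - 1).choose (ℓ + 1) * u.choose (k - (ℓ + 1))
        + (#(nonNbrsIn G A v)).choose ℓ * u.choose (k - (ℓ + 1)) := by
        have hnonNbrsIH := ih _ hsub (Nat.le_sub_one_of_lt hℓk) hnonNbrs
        have heraseIH := ih _ (erase_ssubset hvA) hℓk herase
        rw [Nat.sub_sub, add_comm 1 ℓ] at hnonNbrsIH
        rw [card_erase_of_mem hvA] at heraseIH
        exact Nat.add_le_add heraseIH hnonNbrsIH
    _ ≤ (#A).choose (ℓ + 1) * u.choose (k - (ℓ + 1)) :=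
        Nat.choose_mul_add_choose_mul_le (by omega) (by omega)

omit [DecidableEq V] in
theorem natCard_indepSets_eq [Fintype V] (k : ℕ) :
    Nat.card {S : Finset V // S.card = k ∧ IsIndepOn G S} = #(indepSetsIn G univ k) := by
  rw [Nat.card_eq_fintype_card, Fintype.card_subtype]
  congr 1
  ext S
  simp [mem_indepSetsIn]

end IndepSets

theorem count_indep_sets_upper_bound_general
    (ℓ k u n : ℕ) (hlk : ℓ ≤ k)
    (ε : ℝ) (hε1 : ε ≤ 1)
    (hun : (1 - ε) ^ ℓ * (n : ℝ) ≤ (u : ℝ))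
    (V : Type) [Fintype V] (hV : Fintype.card V = n) (G : SimpleGraph V)
    (hdeg : ∀ S : Finset V, u ≤ S.card →
      ∃ v ∈ S, ε * (S.card : ℝ) - 1 ≤ (degreeOn G S v : ℝ)) :
    Nat.card {S : Finset V // S.card = k ∧ IsIndepOn G S} ≤
      n.choose ℓ * u.choose (k - ℓ) := by
  classical
  rw [natCard_indepSets_eq, ← hV, ← card_univ]
  exact card_indepSetsIn_le G hε1 hdeg univ hlk (by rwa [card_univ, hV])

/-- Container-type counting lemma: if in every vertex subset `S` of size at least `u` some
vertex has degree at least `ε·|S| - 1` in `G[S]`, then the number of independent sets of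
size `k` is at most `C(n,ℓ)·C(u,k-ℓ)`. -/
theorem count_indep_sets_upper_bound
    (ℓ k u n : ℕ) (hlk : ℓ ≤ k) (hu : 0 < u) (hn : 0 < n)
    (ε : ℝ) (hε0 : 0 < ε) (hε1 : ε ≤ 1)
    (hun : (1 - ε) ^ ℓ * (n : ℝ) ≤ (u : ℝ))
    (V : Type) [Fintype V] (hV : Fintype.card V = n) (G : SimpleGraph V)
    (hdeg : ∀ S : Finset V, u ≤ S.card →
      ∃ v ∈ S, ε * (S.card : ℝ) - 1 ≤ (degreeOn G S v : ℝ)) :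
    Nat.card {S : Finset V // S.card = k ∧ IsIndepOn G S} ≤
      n.choose ℓ * u.choose (k - ℓ) :=
  count_indep_sets_upper_bound_general ℓ k u n hlk ε hε1 hun V hV G hdeg
end

section
/- Let F be a hereditary family of graphs such that every graph in F has the (t,k)-homogeneous property, where t and k are positive integers. Let G be a graph on n vertices such that at least half of all vertex subsets of G of size 2t contain a subset of t vertices inducing a subgraph belonging to F (assume n ≥ 2t). Then G contains at least (1/2)·(n/(2t))^k homogeneous sets of size k. -/
/-- `S` is a homogeneous set of `G`: a clique or an independent set. -/
def IsHomog {V : Type} (G : SimpleGraph V) (S : Finset V) : Prop :=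
  G.IsClique (S : Set V) ∨ Gᶜ.IsClique (S : Set V)

/-- `G` has the `(t,k)`-homogeneous property: every subset of `t` vertices contains a
homogeneous subset of size `k`. -/
def TKHomog {V : Type} (t k : ℕ) (G : SimpleGraph V) : Prop :=
  ∀ T : Finset V, T.card = t → ∃ S ⊆ T, S.card = k ∧ IsHomog G S

/-- A hereditary family of graphs. -/
def Hereditary (F : ∀ n : ℕ, SimpleGraph (Fin n) → Prop) : Prop :=
  ∀ n : ℕ, ∀ G : SimpleGraph (Fin n), F n G →
    ∀ (S : Finset (Fin n)) (m : ℕ) (G' : SimpleGraph (Fin m)),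
      Nonempty (G' ≃g G.induce (S : Set (Fin n))) → F m G'

/-- The graph `G` belongs (up to isomorphism) to the family `F`. -/
def InFamily (F : ∀ n : ℕ, SimpleGraph (Fin n) → Prop) {W : Type} (G : SimpleGraph W) : Prop :=
  ∃ m : ℕ, ∃ G' : SimpleGraph (Fin m), F m G' ∧ Nonempty (G ≃g G')

/-!
Double count the pairs `(T, K)` where `T` is a `2t`-set containing a `t`-set that induces a
graph of `F`, and `K ⊆ T` is a homogeneous `k`-set. Each such `T` contains some `K`, since the
`t`-set inside it has the `(t,k)`-homogeneous property, while each `k`-set lies in only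
`C(n-k, 2t-k)` sets of size `2t`. So `C(n,2t)/2 ≤ #homogeneous k-sets · C(n-k, 2t-k)`, and
`C(n,2t) / C(n-k,2t-k) = ∏_{i<k} (n-i)/(2t-i) ≥ (n/2t)^k`.
-/

open Finset

theorem SimpleGraph.IsClique.finsetMap_embedding {V W : Type*} {G : SimpleGraph V}
    {H : SimpleGraph W} {s : Finset V} (f : G ↪g H) (hs : G.IsClique (s : Set V)) :
    H.IsClique (s.map f.toEmbedding : Set W) := by
  rw [coe_map]
  rintro _ ⟨x, hx, rfl⟩ _ ⟨y, hy, rfl⟩ hxy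
  exact f.map_adj_iff.2 (hs hx hy (ne_of_apply_ne _ hxy))

theorem IsHomog.map {V W : Type} {G : SimpleGraph V} {H : SimpleGraph W} {s : Finset V}
    (f : G ↪g H) (hs : IsHomog G s) : IsHomog H (s.map f.toEmbedding) :=
  hs.imp (·.finsetMap_embedding f) (·.finsetMap_embedding (SimpleGraph.Embedding.complEquiv f))

theorem TKHomog.exists_homog_subset_of_iso {V W : Type} [Fintype W] {t k : ℕ}
    {G : SimpleGraph V} {H : SimpleGraph W} {S : Finset V} (hH : TKHomog t k H)
    (hS : S.card = t) (e : G.induce (S : Set V) ≃g H) :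
    ∃ K ⊆ S, K.card = k ∧ IsHomog G K := by
  classical
  have hW : Fintype.card W = t := by
    simpa [hS] using (Fintype.card_congr e.toEquiv).symm
  obtain ⟨K, -, hK, hKhom⟩ := hH univ (by rw [card_univ, hW])
  let f : H ↪g G := (SimpleGraph.Embedding.induce (S : Set V)).comp e.symm.toEmbedding
  refine ⟨K.map f.toEmbedding, fun v hv => ?_, by rw [card_map, hK], hKhom.map f⟩
  obtain ⟨w, -, rfl⟩ := mem_map.1 hv
  exact (e.symm w).2

theorem exists_homog_subset_of_inFamily {F : ∀ n : ℕ, SimpleGraph (Fin n) → Prop} {t k : ℕ}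
    (hTK : ∀ m : ℕ, ∀ G : SimpleGraph (Fin m), F m G → TKHomog t k G)
    {V : Type} {G : SimpleGraph V} {S : Finset V} (hS : S.card = t)
    (hGS : InFamily F (G.induce (S : Set V))) :
    ∃ K ⊆ S, K.card = k ∧ IsHomog G K := by
  obtain ⟨m, H, hH, ⟨e⟩⟩ := hGS
  exact (hTK m H hH).exists_homog_subset_of_iso hS e

theorem Finset.card_filter_superset_le {V : Type*} [Fintype V] [DecidableEq V]
    {A : Finset (Finset V)} {m : ℕ} (hA : ∀ T ∈ A, #T = m) (K : Finset V) :
    #{T ∈ A | K ⊆ T} ≤ (Fintype.card V - #K).choose (m - #K) := by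
  calc #{T ∈ A | K ⊆ T}
      ≤ #((univ \ K).powersetCard (m - #K)) := by
        refine card_le_card_of_injOn (· \ K) (fun T hT => ?_)
          ((superset_injOn_sdiff K).mono fun T hT => (mem_filter.1 hT).2)
        obtain ⟨hTA, hKT⟩ := mem_filter.1 hT
        rw [mem_coe, mem_powersetCard, card_sdiff_of_subset hKT, hA T hTA]
        exact ⟨sdiff_subset_sdiff (subset_univ T) le_rfl, rfl⟩
    _ = (Fintype.card V - #K).choose (m - #K) := by
        rw [card_powersetCard, card_sdiff_of_subset (subset_univ K), card_univ]

theorem Finset.card_le_card_mul_choose_of_forall_exists_subset {V : Type*} [Fintype V]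
    [DecidableEq V] {A B : Finset (Finset V)} {m k : ℕ} (hA : ∀ T ∈ A, #T = m)
    (hB : ∀ K ∈ B, #K = k) (hAB : ∀ T ∈ A, ∃ K ∈ B, K ⊆ T) :
    #A ≤ #B * (Fintype.card V - k).choose (m - k) := by
  simpa using card_mul_le_card_mul (fun T K => K ⊆ T) (m := 1)
    (fun T hT => by
      obtain ⟨K, hKB, hKT⟩ := hAB T hT
      exact card_pos.2 ⟨K, (mem_bipartiteAbove _).2 ⟨hKB, hKT⟩⟩)
    (fun K hK => hB K hK ▸ card_filter_superset_le hA K)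
theorem div_pow_mul_choose_sub_le_choose {a b k : ℕ} (hkb : k ≤ b) (hba : b ≤ a) :
    ((a : ℝ) / b) ^ k * (a - k).choose (b - k) ≤ a.choose b := by
  induction k generalizing a b with
  | zero => simp
  | succ k ih =>
    obtain ⟨b, rfl⟩ : ∃ b', b = b' + 1 := ⟨b - 1, by omega⟩
    obtain ⟨a, rfl⟩ : ∃ a', a = a' + 1 := ⟨a - 1, by omega⟩
    have hchoose : ((a + 1).choose (b + 1) : ℝ) = (a + 1) / (b + 1) * a.choose b := by
      rw [div_mul_eq_mul_div, eq_div_iff (by positivity)]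
      exact_mod_cast (Nat.add_one_mul_choose_eq a b).symm
    have hpow : (((a : ℝ) + 1) / (b + 1)) ^ k ≤ ((a : ℝ) / b) ^ k := by
      rcases Nat.eq_zero_or_pos k with rfl | hk
      · simp
      have hb : (0 : ℝ) < b := by exact_mod_cast hk.trans_le (by omega)
      have hab : (b : ℝ) ≤ a := by exact_mod_cast (by omega : b ≤ a)
      refine pow_le_pow_left₀ (by positivity) ?_ k
      rw [div_le_div_iff₀ (by positivity) hb]
      linarith
    push_cast
    rw [hchoose]
    calc (((a : ℝ) + 1) / (b + 1)) ^ (k + 1) * (a - k).choose (b - k)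
        = (a + 1) / (b + 1) * ((((a : ℝ) + 1) / (b + 1)) ^ k * (a - k).choose (b - k)) := by ring
      _ ≤ (a + 1) / (b + 1) * (((a : ℝ) / b) ^ k * (a - k).choose (b - k)) := by gcongr
      _ ≤ (a + 1) / (b + 1) * a.choose b := by gcongr; exact ih (by omega) (by omega)

theorem count_homog_sets_lower_bound_general
    (F : ∀ n : ℕ, SimpleGraph (Fin n) → Prop)
    (t k : ℕ)
    (hTK : ∀ m : ℕ, ∀ G : SimpleGraph (Fin m), F m G → TKHomog t k G)
    (n : ℕ) (hn : 2 * t ≤ n) (G : SimpleGraph (Fin n))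
    (hhalf : (n.choose (2 * t) : ℝ) / 2 ≤
      (Nat.card {T : Finset (Fin n) // T.card = 2 * t ∧
        ∃ S ⊆ T, S.card = t ∧ InFamily F (G.induce (S : Set (Fin n)))} : ℝ)) :
    (1 / 2 : ℝ) * ((n : ℝ) / (2 * t)) ^ k ≤
      (Nat.card {S : Finset (Fin n) // S.card = k ∧ IsHomog G S} : ℝ) := by
  classical
  rw [Nat.card_eq_fintype_card, Fintype.card_subtype] at hhalf ⊢
  set A : Finset (Finset (Fin n)) := {T | #T = 2 * t ∧
    ∃ S ⊆ T, #S = t ∧ InFamily F (G.induce (S : Set (Fin n)))}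
  set B : Finset (Finset (Fin n)) := {S | #S = k ∧ IsHomog G S}
  have hcover : ∀ T ∈ A, ∃ K ∈ B, K ⊆ T := by
    intro T hT
    obtain ⟨-, S, hST, hS, hSF⟩ := (mem_filter.1 hT).2
    obtain ⟨K, hKS, hK, hKhom⟩ := exists_homog_subset_of_inFamily hTK hS hSF
    exact ⟨K, mem_filter.2 ⟨mem_univ K, hK, hKhom⟩, hKS.trans hST⟩
  have hdouble : #A ≤ #B * (n - k).choose (2 * t - k) := by
    simpa using card_le_card_mul_choose_of_forall_exists_subset
      (fun T hT => (mem_filter.1 hT).2.1) (fun K hK => (mem_filter.1 hK).2.1) hcover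
  have hk2t : k ≤ 2 * t := by
    obtain ⟨T, hT⟩ : A.Nonempty := by
      rw [← card_pos, Nat.pos_iff_ne_zero]
      intro hA
      rw [hA, Nat.cast_zero] at hhalf
      have : (0 : ℝ) < n.choose (2 * t) := by exact_mod_cast Nat.choose_pos hn
      linarith
    obtain ⟨K, hKB, hKT⟩ := hcover T hT
    exact (mem_filter.1 hKB).2.1 ▸ (mem_filter.1 hT).2.1 ▸ card_le_card hKT
  have hD : (0 : ℝ) < (n - k).choose (2 * t - k) := by exact_mod_cast Nat.choose_pos (by omega)
  have hratio := div_pow_mul_choose_sub_le_choose hk2t hn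
  push_cast at hratio
  have key : ((n : ℝ) / (2 * t)) ^ k * (n - k).choose (2 * t - k) ≤
      (2 * #B) * (n - k).choose (2 * t - k) :=
    calc ((n : ℝ) / (2 * t)) ^ k * (n - k).choose (2 * t - k)
        ≤ n.choose (2 * t) := hratio
      _ ≤ 2 * #A := by linarith
      _ ≤ 2 * (#B * (n - k).choose (2 * t - k) : ℕ) := by gcongr
      _ = (2 * #B) * (n - k).choose (2 * t - k) := by push_cast; ring
  linarith [le_of_mul_le_mul_right key hD]

/-- If every graph in a hereditary family `F` has the `(t,k)`-homogeneous property and at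
least half of the `2t`-subsets of vertices of `G` contain a `t`-subset inducing a graph in
`F`, then `G` has at least `(1/2)·(n/(2t))^k` homogeneous sets of size `k`. -/
theorem count_homog_sets_lower_bound
    (F : ∀ n : ℕ, SimpleGraph (Fin n) → Prop) (hF : Hereditary F)
    (t k : ℕ) (ht : 0 < t) (hk : 0 < k)
    (hTK : ∀ m : ℕ, ∀ G : SimpleGraph (Fin m), F m G → TKHomog t k G)
    (n : ℕ) (hn : 2 * t ≤ n) (G : SimpleGraph (Fin n))
    (hhalf : (n.choose (2 * t) : ℝ) / 2 ≤
      (Nat.card {T : Finset (Fin n) // T.card = 2 * t ∧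
        ∃ S ⊆ T, S.card = t ∧ InFamily F (G.induce (S : Set (Fin n)))} : ℝ)) :
    (1 / 2 : ℝ) * ((n : ℝ) / (2 * t)) ^ k ≤
      (Nat.card {S : Finset (Fin n) // S.card = k ∧ IsHomog G S} : ℝ) :=
  count_homog_sets_lower_bound_general F t k hTK n hn G hhalf
end

section
/- Let H be a graph on h vertices and let t, k be positive integers such that every H-free graph has the (t,k)-homogeneous property. If a graph G on n ≥ 2t vertices has at most n^h/(2^{h+1}·t^{h−1}) induced copies of H, then G contains at least (1/2)·(n/(2t))^k homogeneous sets of size k. -/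
/-- The number of induced copies of `H` in `G`. -/
noncomputable def inducedCopyCount {h : ℕ} {V : Type} [Fintype V]
    (H : SimpleGraph (Fin h)) (G : SimpleGraph V) : ℕ :=
  Nat.card {U : Finset V // Nonempty (H ≃g G.induce (U : Set V))}

/-!
Call a `2t`-subset of the vertices good if it contains at most `t` induced copies of `H`.
Double counting pairs (copy, `2t`-set containing it) and using
`n^h C(n-h, 2t-h) ≤ (2t)^h C(n, 2t)`, the bound on the number of copies makes at least half of the
`2t`-sets good. Deleting one vertex from each copy inside a good set leaves `t` vertices inducing an
`H`-free graph, hence a homogeneous `k`-set. As each `k`-set lies in at most `C(n-k, 2t-k)` of the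
`2t`-sets, `n^k C(n-k, 2t-k) ≤ (2t)^k C(n, 2t)` turns the number of good sets into the bound.
-/

open Finset

namespace Nat

theorem descFactorial_mul_pow_le {a n : ℕ} (han : a ≤ n) (k : ℕ) :
    a.descFactorial k * n ^ k ≤ n.descFactorial k * a ^ k := by
  induction k with
  | zero => simp
  | succ k ih =>
    have hstep : (a - k) * n ≤ (n - k) * a := by
      rw [Nat.sub_mul, Nat.sub_mul, mul_comm n a]
      exact Nat.sub_le_sub_left (Nat.mul_le_mul_left k han) _
    calc a.descFactorial (k + 1) * n ^ (k + 1)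
        = ((a - k) * n) * (a.descFactorial k * n ^ k) := by rw [descFactorial_succ]; ring
      _ ≤ ((n - k) * a) * (n.descFactorial k * a ^ k) := Nat.mul_le_mul hstep ih
      _ = n.descFactorial (k + 1) * a ^ (k + 1) := by rw [descFactorial_succ]; ring

theorem pow_mul_choose_sub_le {k a n : ℕ} (hka : k ≤ a) (han : a ≤ n) :
    n ^ k * (n - k).choose (a - k) ≤ a ^ k * n.choose a := by
  refine Nat.le_of_mul_le_mul_right ?_ (descFactorial_pos.mpr hka)
  calc n ^ k * (n - k).choose (a - k) * a.descFactorial k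
      ≤ n.descFactorial k * a ^ k * (n - k).choose (a - k) := by
        nlinarith [descFactorial_mul_pow_le han k]
    _ = a ^ k * n.choose a * a.descFactorial k := by
        rw [descFactorial_eq_factorial_mul_choose, descFactorial_eq_factorial_mul_choose]
        linear_combination (k ! * a ^ k) * (choose_mul (n := n) hka).symm

end Nat

namespace Finset

variable {α : Type*} [DecidableEq α]

theorem card_filter_superset_le_choose [Fintype α] {ℬ : Finset (Finset α)} {a : ℕ}
    (hℬ : ∀ W ∈ ℬ, #W = a) (U : Finset α) :
    #{W ∈ ℬ | U ⊆ W} ≤ (Fintype.card α - #U).choose (a - #U) := by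
  calc #{W ∈ ℬ | U ⊆ W} ≤ #(powersetCard (a - #U) (univ \ U)) := by
        refine card_le_card_of_injOn (· \ U) (fun W hW ↦ ?_) (fun W₁ hW₁ W₂ hW₂ h ↦ ?_)
        · rw [mem_coe, mem_filter] at hW
          rw [mem_coe, mem_powersetCard, card_sdiff_of_subset hW.2, hℬ W hW.1]
          exact ⟨sdiff_subset_sdiff (subset_univ W) le_rfl, rfl⟩
        · rw [mem_coe, mem_filter] at hW₁ hW₂
          rw [← sdiff_union_of_subset hW₁.2, ← sdiff_union_of_subset hW₂.2]
          exact congrArg (· ∪ U) h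
    _ = (Fintype.card α - #U).choose (a - #U) := by
        rw [card_powersetCard, card_sdiff_of_subset (subset_univ U), card_univ]

theorem card_mul_le_card_mul_choose [Fintype α] {𝒜 ℬ : Finset (Finset α)} {s a m : ℕ}
    (h𝒜 : ∀ U ∈ 𝒜, #U = s) (hℬ : ∀ W ∈ ℬ, #W = a)
    (hm : ∀ W ∈ ℬ, m ≤ #{U ∈ 𝒜 | U ⊆ W}) :
    #ℬ * m ≤ #𝒜 * (Fintype.card α - s).choose (a - s) :=
  card_mul_le_card_mul (fun W U : Finset α ↦ U ⊆ W) hm fun U hU ↦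
    h𝒜 U hU ▸ card_filter_superset_le_choose hℬ U

theorem exists_subset_card_eq_forall_not_subset (𝒜 : Finset (Finset α))
    (h𝒜 : ∀ U ∈ 𝒜, U.Nonempty) {W : Finset α} {t : ℕ} (hW : t + #𝒜 ≤ #W) :
    ∃ T ⊆ W, #T = t ∧ ∀ U ∈ 𝒜, ¬U ⊆ T := by
  induction 𝒜 using Finset.induction_on generalizing W with
  | empty =>
    obtain ⟨T, hTW, hT⟩ := exists_subset_card_eq (n := t) (by simpa using hW)
    exact ⟨T, hTW, hT, by simp⟩
  | insert U 𝒜 hU ih =>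
    obtain ⟨x, hx⟩ := h𝒜 U (mem_insert_self U 𝒜)
    have hcard : t + #𝒜 ≤ #(W.erase x) := by
      have := pred_card_le_card_erase (s := W) (a := x)
      rw [card_insert_of_notMem hU] at hW
      omega
    obtain ⟨T, hTW, hT, hT𝒜⟩ := ih (fun V hV ↦ h𝒜 V (mem_insert_of_mem hV)) hcard
    refine ⟨T, hTW.trans (erase_subset x W), hT, ?_⟩
    rintro V hV hVT
    rcases mem_insert.mp hV with rfl | hV
    · exact notMem_erase x W (hTW (hVT hx))
    · exact hT𝒜 V hV hVT

end Finset

section Graphs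

variable {V W : Type} [Fintype V]

open Classical in
noncomputable def inducedCopies (H : SimpleGraph W) (G : SimpleGraph V) : Finset (Finset V) :=
  {U | Nonempty (H ≃g G.induce (U : Set V))}

open Classical in
noncomputable def homogSets (G : SimpleGraph V) (k : ℕ) : Finset (Finset V) :=
  {S | #S = k ∧ IsHomog G S}

theorem mem_inducedCopies {H : SimpleGraph W} {G : SimpleGraph V} {U : Finset V} :
    U ∈ inducedCopies H G ↔ Nonempty (H ≃g G.induce (U : Set V)) := by
  simp [inducedCopies]

theorem mem_homogSets {G : SimpleGraph V} {k : ℕ} {S : Finset V} :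
    S ∈ homogSets G k ↔ #S = k ∧ IsHomog G S := by
  simp [homogSets]

theorem inducedCopyCount_eq_card {h : ℕ} (H : SimpleGraph (Fin h)) (G : SimpleGraph V) :
    inducedCopyCount H G = #(inducedCopies H G) := by
  classical
  rw [inducedCopyCount, Nat.card_eq_fintype_card, Fintype.card_subtype, inducedCopies]

theorem natCard_homog_eq_card_homogSets (G : SimpleGraph V) (k : ℕ) :
    Nat.card {S : Finset V // #S = k ∧ IsHomog G S} = #(homogSets G k) := by
  classical
  rw [Nat.card_eq_fintype_card, Fintype.card_subtype, homogSets]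

theorem card_of_mem_inducedCopies [Fintype W] {H : SimpleGraph W} {G : SimpleGraph V}
    {U : Finset V} (hU : U ∈ inducedCopies H G) : #U = Fintype.card W := by
  obtain ⟨e⟩ := mem_inducedCopies.mp hU
  simpa using (Fintype.card_congr e.toEquiv).symm

theorem map_mem_inducedCopies [Fintype W] {H : SimpleGraph W} {G : SimpleGraph V}
    (φ : H ↪g G) : univ.map φ.toEmbedding ∈ inducedCopies H G := by
  rw [mem_inducedCopies, coe_map, coe_univ, Set.image_univ]
  exact ⟨φ.isoInduceRange⟩

end Graphs

theorem IsHomog.map_of_comap {V V' : Type} {G : SimpleGraph V'} {f : V ↪ V'} {S : Finset V}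
    (hS : IsHomog (G.comap f) S) : IsHomog G (S.map f) := by
  rcases hS with hS | hS
  · left
    rintro _ hfx _ hfy hxy
    obtain ⟨x, hx, rfl⟩ := mem_map.mp hfx
    obtain ⟨y, hy, rfl⟩ := mem_map.mp hfy
    exact hS hx hy (ne_of_apply_ne f hxy)
  · right
    rintro _ hfx _ hfy hxy
    obtain ⟨x, hx, rfl⟩ := mem_map.mp hfx
    obtain ⟨y, hy, rfl⟩ := mem_map.mp hfy
    exact ⟨hxy, (hS hx hy (ne_of_apply_ne f hxy)).2⟩

section Homogeneous

variable {V W : Type} [Fintype V] [Fintype W] {H : SimpleGraph W} {t k : ℕ}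

theorem exists_homog_subset_of_forall_not_subset
    (hTK : ∀ m (G' : SimpleGraph (Fin m)), IsEmpty (H ↪g G') → TKHomog t k G')
    {G : SimpleGraph V} {T : Finset V} (hT : #T = t)
    (hfree : ∀ U ∈ inducedCopies H G, ¬U ⊆ T) :
    ∃ S ⊆ T, #S = k ∧ IsHomog G S := by
  subst hT
  let f : Fin #T ↪ V := T.equivFin.symm.toEmbedding.trans (Function.Embedding.subtype _)
  have hfT : ∀ i, f i ∈ T := fun i ↦ (T.equivFin.symm i).2
  have hfree' : IsEmpty (H ↪g G.comap f) := by
    refine ⟨fun φ ↦ hfree _ (map_mem_inducedCopies ((SimpleGraph.Embedding.comap f G).comp φ))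
      fun x hx ↦ ?_⟩
    obtain ⟨i, -, rfl⟩ := mem_map.mp hx
    exact hfT (φ i)
  obtain ⟨S, -, hS, hSh⟩ := hTK _ _ hfree' univ (card_fin _)
  refine ⟨S.map f, fun x hx ↦ ?_, by rw [card_map, hS], hSh.map_of_comap⟩
  obtain ⟨i, -, rfl⟩ := mem_map.mp hx
  exact hfT i

theorem exists_homog_subset_of_card_copies_le [DecidableEq V] [Nonempty W]
    (hTK : ∀ m (G' : SimpleGraph (Fin m)), IsEmpty (H ↪g G') → TKHomog t k G')
    {G : SimpleGraph V} {A : Finset V} (hA : t + #{U ∈ inducedCopies H G | U ⊆ A} ≤ #A) :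
    ∃ S ⊆ A, #S = k ∧ IsHomog G S := by
  have hne : ∀ U ∈ {U ∈ inducedCopies H G | U ⊆ A}, U.Nonempty := fun U hU ↦ by
    rw [← card_pos, card_of_mem_inducedCopies (mem_filter.mp hU).1]
    exact Fintype.card_pos
  obtain ⟨T, hTA, hT, hfree⟩ := exists_subset_card_eq_forall_not_subset _ hne hA
  obtain ⟨S, hST, hS⟩ := exists_homog_subset_of_forall_not_subset hTK hT
    fun U hU hUT ↦ hfree U (mem_filter.mpr ⟨hU, hUT.trans hTA⟩) hUT
  exact ⟨S, hST.trans hTA, hS⟩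

end Homogeneous

section Counting

variable {V : Type} [Fintype V] [DecidableEq V] {h t : ℕ} {H : SimpleGraph (Fin h)}
  {G : SimpleGraph V}

theorem card_many_copies_le_choose_div_two (hh : 0 < h) (ht : 2 * t ≤ Fintype.card V)
    (hcopies : (#(inducedCopies H G) : ℝ) ≤
      (Fintype.card V : ℝ) ^ h / (2 ^ (h + 1) * (t : ℝ) ^ (h - 1))) :
    (#{A ∈ powersetCard (2 * t) univ | t < #{U ∈ inducedCopies H G | U ⊆ A}} : ℝ) ≤
      ((Fintype.card V).choose (2 * t) : ℝ) / 2 := by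
  set n := Fintype.card V
  set bad :=
    {A ∈ powersetCard (2 * t) (univ : Finset V) | t < #{U ∈ inducedCopies H G | U ⊆ A}}
  rcases lt_or_ge (2 * t) h with h2t | h2t
  · have : bad = ∅ := filter_eq_empty_iff.mpr fun A hA hbad ↦ by
      obtain ⟨U, hU⟩ := card_pos.mp (t.zero_le.trans_lt hbad)
      have hUA := card_le_card (mem_filter.mp hU).2
      rw [card_of_mem_inducedCopies (mem_filter.mp hU).1, Fintype.card_fin,
        (mem_powersetCard.mp hA).2] at hUA
      omega
    rw [this, card_empty, Nat.cast_zero]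
    positivity
  obtain ⟨g, rfl⟩ : ∃ g, h = g + 1 := Nat.exists_eq_add_one.mpr hh
  have htpos : (0 : ℝ) < t := by norm_cast; omega
  have hdouble : #bad * (t + 1) ≤ #(inducedCopies H G) * (n - (g + 1)).choose (2 * t - (g + 1)) :=
    card_mul_le_card_mul_choose (fun U hU ↦ (card_of_mem_inducedCopies hU).trans (card_fin _))
      (fun A hA ↦ (mem_powersetCard.mp (mem_filter.mp hA).1).2) fun A hA ↦ (mem_filter.mp hA).2
  have hchoose := Nat.pow_mul_choose_sub_le h2t ht
  set c := (n - (g + 1)).choose (2 * t - (g + 1))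
  rw [Nat.add_sub_cancel] at hcopies
  rw [le_div_iff₀ two_pos, ← mul_le_mul_iff_of_pos_right (by positivity : (0 : ℝ) < t + 1)]
  calc (#bad : ℝ) * 2 * (t + 1) ≤ 2 * (#(inducedCopies H G) * c) := by
        rw [mul_right_comm, mul_comm]; exact_mod_cast Nat.mul_le_mul_left 2 hdouble
    _ ≤ 2 * ((n : ℝ) ^ (g + 1) * c / (2 ^ (g + 1 + 1) * (t : ℝ) ^ g)) := by
        rw [mul_div_right_comm]; gcongr
    _ ≤ 2 * (((2 * t : ℕ) : ℝ) ^ (g + 1) * n.choose (2 * t) /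
          (2 ^ (g + 1 + 1) * (t : ℝ) ^ g)) := by
        gcongr 2 * (?_ / _); exact_mod_cast hchoose
    _ = t * n.choose (2 * t) := by push_cast; field_simp; ring
    _ ≤ n.choose (2 * t) * (t + 1) := by nlinarith [(n.choose (2 * t)).cast_nonneg (α := ℝ)]

theorem choose_div_two_le_card_few_copies (hh : 0 < h) (ht : 2 * t ≤ Fintype.card V)
    (hcopies : (#(inducedCopies H G) : ℝ) ≤
      (Fintype.card V : ℝ) ^ h / (2 ^ (h + 1) * (t : ℝ) ^ (h - 1))) :
    ((Fintype.card V).choose (2 * t) : ℝ) / 2 ≤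
      #{A ∈ powersetCard (2 * t) univ | #{U ∈ inducedCopies H G | U ⊆ A} ≤ t} := by
  have hsplit := card_filter_add_card_filter_not (s := powersetCard (2 * t) (univ : Finset V))
    fun A ↦ #{U ∈ inducedCopies H G | U ⊆ A} ≤ t
  simp only [not_le, card_powersetCard, card_univ] at hsplit
  have hbad := card_many_copies_le_choose_div_two hh ht hcopies
  rw [← hsplit, Nat.cast_add] at hbad ⊢
  linarith

variable {k : ℕ}

theorem card_few_copies_le_card_homogSets_mul_choose
    (hTK : ∀ m (G' : SimpleGraph (Fin m)), IsEmpty (H ↪g G') → TKHomog t k G') (hh : 0 < h) :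
    #{A ∈ powersetCard (2 * t) univ | #{U ∈ inducedCopies H G | U ⊆ A} ≤ t} ≤
      #(homogSets G k) * (Fintype.card V - k).choose (2 * t - k) := by
  have : Nonempty (Fin h) := ⟨⟨0, hh⟩⟩
  refine (mul_one _).symm.trans_le <| card_mul_le_card_mul_choose
    (fun S hS ↦ (mem_homogSets.mp hS).1)
    (fun A hA ↦ (mem_powersetCard.mp (mem_filter.mp hA).1).2) fun A hA ↦ ?_
  rw [mem_filter, mem_powersetCard] at hA
  obtain ⟨S, hSA, hS⟩ := exists_homog_subset_of_card_copies_le (G := G) (A := A) hTK (by omega)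
  exact card_pos.mpr ⟨S, mem_filter.mpr ⟨mem_homogSets.mpr hS, hSA⟩⟩

theorem half_mul_div_pow_le_card_homogSets
    (hTK : ∀ m (G' : SimpleGraph (Fin m)), IsEmpty (H ↪g G') → TKHomog t k G')
    (hh : 0 < h) (ht : 2 * t ≤ Fintype.card V)
    (hcopies : (#(inducedCopies H G) : ℝ) ≤
      (Fintype.card V : ℝ) ^ h / (2 ^ (h + 1) * (t : ℝ) ^ (h - 1))) :
    (1 / 2 : ℝ) * ((Fintype.card V : ℝ) / (2 * t)) ^ k ≤ #(homogSets G k) := by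
  set n := Fintype.card V
  set good :=
    {A ∈ powersetCard (2 * t) (univ : Finset V) | #{U ∈ inducedCopies H G | U ⊆ A} ≤ t}
  have hgood : (n.choose (2 * t) : ℝ) / 2 ≤ #good :=
    choose_div_two_le_card_few_copies hh ht hcopies
  have hcount : #good ≤ _ := card_few_copies_le_card_homogSets_mul_choose hTK hh
  obtain ⟨A, hA⟩ : good.Nonempty := by
    rw [← card_pos, ← Nat.cast_pos (α := ℝ)]
    exact (div_pos (Nat.cast_pos.mpr (Nat.choose_pos ht)) two_pos).trans_le hgood
  have hk : k ≤ 2 * t := by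
    rw [mem_filter, mem_powersetCard] at hA
    have : Nonempty (Fin h) := ⟨⟨0, hh⟩⟩
    obtain ⟨S, hSA, hS, -⟩ :=
      exists_homog_subset_of_card_copies_le (G := G) (A := A) hTK (by omega)
    exact hS ▸ hA.1.2 ▸ card_le_card hSA
  have hchoose :
      (n : ℝ) ^ k * (n - k).choose (2 * t - k) ≤ (2 * t) ^ k * n.choose (2 * t) := by
    exact_mod_cast Nat.pow_mul_choose_sub_le hk ht
  have hC : (0 : ℝ) < (n - k).choose (2 * t - k) := by exact_mod_cast Nat.choose_pos (by omega)
  rw [div_pow, ← mul_div_assoc]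
  rcases (pow_nonneg (by positivity : (0 : ℝ) ≤ 2 * t) k).eq_or_lt with h0 | h0
  · rw [← h0, div_zero]
    positivity
  rw [div_le_iff₀ h0, ← mul_le_mul_iff_of_pos_right hC]
  calc 1 / 2 * (n : ℝ) ^ k * (n - k).choose (2 * t - k)
      ≤ (2 * t) ^ k * ((n.choose (2 * t) : ℝ) / 2) := by linarith
    _ ≤ (2 * t) ^ k * (#(homogSets G k) * (n - k).choose (2 * t - k)) := by
        gcongr
        exact hgood.trans (by exact_mod_cast hcount)
    _ = #(homogSets G k) * (2 * t) ^ k * (n - k).choose (2 * t - k) := by ring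

end Counting

theorem count_homog_sets_from_few_copies_general
    {h : ℕ} (H : SimpleGraph (Fin h)) (t k : ℕ)
    (hTK : ∀ m : ℕ, ∀ G : SimpleGraph (Fin m), IsEmpty (H ↪g G) → TKHomog t k G)
    (n : ℕ) (hn : 2 * t ≤ n) (G : SimpleGraph (Fin n))
    (hcopies : (inducedCopyCount H G : ℝ) ≤
      (n : ℝ) ^ h / ((2 : ℝ) ^ (h + 1) * (t : ℝ) ^ (h - 1))) :
    (1 / 2 : ℝ) * ((n : ℝ) / (2 * t)) ^ k ≤
      (Nat.card {S : Finset (Fin n) // S.card = k ∧ IsHomog G S} : ℝ) := by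
  rw [inducedCopyCount_eq_card] at hcopies
  have hh : 0 < h := by
    refine Nat.pos_of_ne_zero fun h0 ↦ ?_
    subst h0
    have hempty : 0 < #(inducedCopies H G) :=
      card_pos.mpr ⟨_, map_mem_inducedCopies SimpleGraph.IsIndContained.of_isEmpty.some⟩
    have : (1 : ℝ) ≤ #(inducedCopies H G) := by exact_mod_cast hempty
    norm_num at hcopies
    linarith
  rw [natCard_homog_eq_card_homogSets]
  simpa using half_mul_div_pow_le_card_homogSets (G := G) hTK hh (by simpa using hn)
    (by simpa using hcopies)

/-- If every `H`-free graph has the `(t,k)`-homogeneous property and `G` on `n ≥ 2t`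
vertices has at most `n^h/(2^(h+1)·t^(h-1))` induced copies of `H`, then `G` contains at
least `(1/2)·(n/(2t))^k` homogeneous sets of size `k`. -/
theorem count_homog_sets_from_few_copies
    {h : ℕ} (H : SimpleGraph (Fin h)) (t k : ℕ) (ht : 0 < t) (hk : 0 < k)
    (hTK : ∀ m : ℕ, ∀ G : SimpleGraph (Fin m), IsEmpty (H ↪g G) → TKHomog t k G)
    (n : ℕ) (hn : 2 * t ≤ n) (G : SimpleGraph (Fin n))
    (hcopies : (inducedCopyCount H G : ℝ) ≤
      (n : ℝ) ^ h / ((2 : ℝ) ^ (h + 1) * (t : ℝ) ^ (h - 1))) :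
    (1 / 2 : ℝ) * ((n : ℝ) / (2 * t)) ^ k ≤
      (Nat.card {S : Finset (Fin n) // S.card = k ∧ IsHomog G S} : ℝ) :=
  count_homog_sets_from_few_copies_general H t k hTK n hn G hcopies
end

section
/- Let r ≥ 2 and ℓ ≥ 0 be integers, let k ≥ (r−1)·ℓ be an integer, let u, n be positive integers, and let 0 < ε ≤ 1 be a real number such that (1−ε)^ℓ·n ≤ u. Let G be an r-uniform hypergraph on n vertices such that every vertex subset S with |S| > u contains a vertex whose degree in the induced subhypergraph G[S] is at least ε·(|S|−1)^{r−1}. Then the number of independent sets of size k in G is at most C(n,(r−1)ℓ)·C(u,k−(r−1)ℓ), where C(a,b) denotes the binomial coefficient. -/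
/-!
A container argument. Order the vertices linearly. For `F ⊆ V` run the following procedure on
`S = V`: while `|S| > u`, let `v` be the least vertex of degree at least `ε (|S| - 1)^(r-1)` in
`G[S]`; if `v ∉ F` delete `v`, otherwise delete `v` together with a set `R` of at least
`ε (|S| - 1)` vertices found in the link of `v`. To find `R` in an `s`-uniform family on `T` with
at least `ε |T|^s` edges, look at the heavy vertices (degree at least `ε |T|^(s-1)`, by averaging
at least `ε |T|` of them): if one lies in `F`, pass to the link of the least such vertex and
recurse, otherwise take them all. The result `C(F)` has at most `u` vertices.

For an independent set `I`, running the procedure with `F = I` removes vertices of `I` only as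
pivots or as link vertices, at most `r - 1` of them in each round that shrinks `S` by a factor
`1 - ε`, so `I \ C(I)` has at most `(r - 1) ℓ` elements; and since every choice is a least
element, any `F` with `I \ C(I) ⊆ F ⊆ I` gives `C(F) = C(I) ⊇ I \ F`. Thus `I ↦ (F, I \ F)`
injects the independent `k`-sets into pairs of an `(r - 1) ℓ`-set and a `(k - (r - 1) ℓ)`-subset
of some `C(F)`.
-/

/-- The degree of `v` in the induced subhypergraph `G[S]`: the number of edges of `G`
contained in `S` and containing `v`. -/
noncomputable def hypDegreeOn {V : Type} (G : Finset (Finset V)) (S : Finset V) (v : V) : ℕ :=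
  Nat.card {e : Finset V // e ∈ G ∧ e ⊆ S ∧ v ∈ e}

open Finset

namespace Finset

variable {α : Type*} [DecidableEq α] {𝒜 : Finset (Finset α)} {T I : Finset α} {s : ℕ}

lemma card_memberSubfamily (a : α) (𝒜 : Finset (Finset α)) :
    #(𝒜.memberSubfamily a) = #{t ∈ 𝒜 | a ∈ t} :=
  card_image_of_injOn ((erase_injOn' a).mono fun _ ht => (mem_filter.mp ht).2)

lemma memberSubfamily_subset_powersetCard (h𝒜 : 𝒜 ⊆ T.powersetCard (s + 1)) (a : α) :
    𝒜.memberSubfamily a ⊆ (T.erase a).powersetCard s := fun t ht => by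
  obtain ⟨hat, ha⟩ := mem_memberSubfamily.mp ht
  obtain ⟨hT, hcard⟩ := mem_powersetCard.mp (h𝒜 hat)
  refine mem_powersetCard.mpr ⟨fun x hx => mem_erase.mpr ⟨?_, hT (mem_insert_of_mem hx)⟩, ?_⟩
  · rintro rfl
    exact ha hx
  · rwa [card_insert_of_notMem ha, add_left_inj] at hcard

lemma card_memberSubfamily_le (h𝒜 : 𝒜 ⊆ T.powersetCard (s + 1)) (a : α) :
    #(𝒜.memberSubfamily a) ≤ #T ^ s :=
  calc #(𝒜.memberSubfamily a) ≤ #((T.erase a).powersetCard s) :=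
        card_le_card (memberSubfamily_subset_powersetCard h𝒜 a)
    _ = (#(T.erase a)).choose s := card_powersetCard _ _
    _ ≤ #T ^ s := (Nat.choose_le_pow _ _).trans (Nat.pow_le_pow_left card_erase_le _)

lemma sum_card_memberSubfamily (h𝒜 : 𝒜 ⊆ T.powersetCard s) :
    ∑ a ∈ T, #(𝒜.memberSubfamily a) = s * #𝒜 :=
  calc ∑ a ∈ T, #(𝒜.memberSubfamily a) = ∑ t ∈ 𝒜, #{a ∈ T | a ∈ t} := by
        simp_rw [card_memberSubfamily]
        exact sum_card_bipartiteAbove_eq_sum_card_bipartiteBelow (· ∈ ·)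
    _ = ∑ _t ∈ 𝒜, s := sum_congr rfl fun t ht => by
        obtain ⟨htT, hts⟩ := mem_powersetCard.mp (h𝒜 ht)
        rw [filter_mem_eq_inter, inter_eq_right.mpr htT, hts]
    _ = s * #𝒜 := by rw [sum_const, smul_eq_mul, mul_comm]

lemma not_subset_of_mem_memberSubfamily (h𝒜 : ∀ t ∈ 𝒜, ¬t ⊆ I) {a : α} (ha : a ∈ I) :
    ∀ t ∈ 𝒜.memberSubfamily a, ¬t ⊆ I :=
  fun _ ht htI => h𝒜 _ (mem_memberSubfamily.mp ht).1 (insert_subset ha htI)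

lemma sdiff_insert_ssubset {R : Finset α} {a : α} (ha : a ∈ T) : T \ insert a R ⊂ T :=
  ⟨sdiff_subset, fun h => (mem_sdiff.mp (h ha)).2 (mem_insert_self a R)⟩

end Finset

lemma hypDegreeOn_eq_card_memberSubfamily {V : Type} [DecidableEq V] (G : Finset (Finset V))
    (S : Finset V) (v : V) : hypDegreeOn G S v = #({e ∈ G | e ⊆ S}.memberSubfamily v) := by
  rw [hypDegreeOn, card_memberSubfamily, filter_filter, ← Nat.card_eq_finsetCard]
  exact Nat.card_congr (Equiv.subtypeEquivRight fun e => by simp)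

namespace HypergraphContainer

variable {V : Type} [LinearOrder V]

noncomputable def heavyVertices (ε : ℝ) (s : ℕ) (T : Finset V) (H : Finset (Finset V)) :
    Finset V :=
  {w ∈ T | ε * (#T : ℝ) ^ s ≤ #(H.memberSubfamily w)}

lemma heavyVertices_subset (ε : ℝ) (s : ℕ) (T : Finset V) (H : Finset (Finset V)) :
    heavyVertices ε s T H ⊆ T :=
  filter_subset _ _

lemma le_card_heavyVertices {ε : ℝ} {s : ℕ} {T : Finset V} {H : Finset (Finset V)}
    (hε : 0 ≤ ε) (hs : 1 ≤ s) (hH : H ⊆ T.powersetCard (s + 1))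
    (hcard : ε * (#T : ℝ) ^ (s + 1) ≤ #H) : ε * #T ≤ #(heavyVertices ε s T H) := by
  set A := heavyVertices ε s T H
  have hsum : ∑ w ∈ T \ A, (#(H.memberSubfamily w) : ℝ) + ∑ w ∈ A, (#(H.memberSubfamily w) : ℝ)
      = (s + 1) * #H := by
    rw [sum_sdiff (heavyVertices_subset ε s T H)]
    exact_mod_cast sum_card_memberSubfamily hH
  have hA : ∑ w ∈ A, (#(H.memberSubfamily w) : ℝ) ≤ #A * (#T : ℝ) ^ s := by
    rw [← nsmul_eq_mul]
    exact sum_le_card_nsmul _ _ _ fun w _ => by exact_mod_cast card_memberSubfamily_le hH w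
  have hTA : ∑ w ∈ T \ A, (#(H.memberSubfamily w) : ℝ) ≤ #T * (ε * (#T : ℝ) ^ s) :=
    calc ∑ w ∈ T \ A, (#(H.memberSubfamily w) : ℝ) ≤ #(T \ A) * (ε * (#T : ℝ) ^ s) := by
          rw [← nsmul_eq_mul]
          refine sum_le_card_nsmul _ _ _ fun w hw => ?_
          obtain ⟨hwT, hwA⟩ := mem_sdiff.mp hw
          exact (not_le.mp fun h => hwA (mem_filter.mpr ⟨hwT, h⟩)).le
      _ ≤ #T * (ε * (#T : ℝ) ^ s) := by
          gcongr
          exact sdiff_subset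
  have hs' : (1 : ℝ) ≤ s := by exact_mod_cast hs
  have hpos : 0 ≤ ε * (#T : ℝ) ^ (s + 1) := by positivity
  rcases (#T).eq_zero_or_pos with hT | hT
  · simp [hT]
  · refine le_of_mul_le_mul_right ?_ (by positivity : 0 < (#T : ℝ) ^ s)
    rw [pow_succ] at hcard hpos
    nlinarith

noncomputable def deletionSet (ε : ℝ) : ℕ → Finset V → Finset (Finset V) → Finset V → Finset V
  | 0, _, _, _ => ∅
  | 1, T, H, _ => {x ∈ T | {x} ∈ H}
  | s + 2, T, H, F =>
    if h : (heavyVertices ε (s + 1) T H ∩ F).Nonempty then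
      let w := (heavyVertices ε (s + 1) T H ∩ F).min' h
      insert w (deletionSet ε (s + 1) (T.erase w) (H.memberSubfamily w) F)
    else heavyVertices ε (s + 1) T H

lemma deletionSet_subset (ε : ℝ) (s : ℕ) (T : Finset V) (H : Finset (Finset V)) (F : Finset V) :
    deletionSet ε s T H F ⊆ T := by
  induction s using Nat.strong_induction_on generalizing T H with
  | _ s ih =>
    match s with
    | 0 => exact empty_subset _
    | 1 => exact filter_subset _ _
    | s + 2 =>
      rw [deletionSet]
      split_ifs with h
      · have hw := mem_of_mem_inter_left ((heavyVertices ε (s + 1) T H ∩ F).min'_mem h)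
        exact insert_subset (heavyVertices_subset _ _ _ _ hw)
          ((ih (s + 1) (by omega) _ _).trans (erase_subset _ _))
      · exact heavyVertices_subset _ _ _ _

lemma le_card_deletionSet {ε : ℝ} (hε0 : 0 ≤ ε) (hε1 : ε ≤ 1) {s : ℕ} (hs : 1 ≤ s)
    {T : Finset V} {H : Finset (Finset V)} (F : Finset V) (hH : H ⊆ T.powersetCard s)
    (hcard : ε * (#T : ℝ) ^ s ≤ #H) : ε * #T ≤ #(deletionSet ε s T H F) := by
  induction s using Nat.strong_induction_on generalizing T H with
  | _ s ih =>
    match s with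
    | 1 =>
      have hH1 : H ⊆ {x ∈ T | {x} ∈ H}.map ⟨({·}), singleton_injective⟩ := fun e he => by
        obtain ⟨heT, he1⟩ := mem_powersetCard.mp (hH he)
        obtain ⟨x, rfl⟩ := card_eq_one.mp he1
        exact mem_map_of_mem _ (mem_filter.mpr ⟨heT (mem_singleton_self x), he⟩)
      rw [deletionSet]
      calc ε * (#T : ℝ) = ε * (#T : ℝ) ^ 1 := by rw [pow_one]
        _ ≤ #H := hcard
        _ ≤ #{x ∈ T | {x} ∈ H} := by exact_mod_cast (card_le_card hH1).trans_eq (card_map _)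
    | s + 2 =>
      rw [deletionSet]
      split_ifs with h
      · set w := (heavyVertices ε (s + 1) T H ∩ F).min' h
        have hwA := mem_of_mem_inter_left ((heavyVertices ε (s + 1) T H ∩ F).min'_mem h)
        have hwT : w ∈ T := heavyVertices_subset _ _ _ _ hwA
        have hTw : (#(T.erase w) : ℝ) = #T - 1 := by
          rw [card_erase_of_mem hwT, Nat.cast_sub (card_pos.mpr ⟨w, hwT⟩), Nat.cast_one]
        have hlink : ε * (#(T.erase w) : ℝ) ^ (s + 1) ≤ #(H.memberSubfamily w) := by
          refine le_trans ?_ (mem_filter.mp hwA).2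
          gcongr
          exact erase_subset _ _
        have hrec := ih (s + 1) (by omega) (by omega) (memberSubfamily_subset_powersetCard hH w)
          hlink
        have hw : w ∉ deletionSet ε (s + 1) (T.erase w) (H.memberSubfamily w) F :=
          fun hw => notMem_erase w T (deletionSet_subset _ _ _ _ _ hw)
        rw [card_insert_of_notMem hw, Nat.cast_succ]
        rw [hTw] at hrec
        nlinarith
      · exact le_card_heavyVertices hε0 (by omega) hH hcard

lemma deletionSet_eq_of_subset {ε : ℝ} {I F : Finset V} (s : ℕ) (T : Finset V)
    (H : Finset (Finset V)) (hIF : I ∩ deletionSet ε s T H I ⊆ F) (hFI : F ∩ T ⊆ I) :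
    deletionSet ε s T H F = deletionSet ε s T H I := by
  induction s using Nat.strong_induction_on generalizing T H with
  | _ s ih =>
    match s with
    | 0 | 1 => rfl
    | s + 2 =>
      rw [deletionSet] at hIF ⊢
      rw [deletionSet]
      set A := heavyVertices ε (s + 1) T H
      have hAF : A ∩ F ⊆ A ∩ I := fun x hx =>
        mem_inter.mpr ⟨mem_of_mem_inter_left hx, hFI (mem_inter.mpr
          ⟨mem_of_mem_inter_right hx, heavyVertices_subset _ _ _ _ (mem_of_mem_inter_left hx)⟩)⟩
      by_cases hI : (A ∩ I).Nonempty
      · set w := (A ∩ I).min' hI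
        rw [dif_pos hI] at hIF
        have hwI : w ∈ A ∩ I := min'_mem _ hI
        have hwF : w ∈ A ∩ F := mem_inter.mpr ⟨mem_of_mem_inter_left hwI,
          hIF (mem_inter.mpr ⟨mem_of_mem_inter_right hwI, mem_insert_self _ _⟩)⟩
        have hmin : (A ∩ F).min' ⟨w, hwF⟩ = w :=
          le_antisymm (min'_le _ _ hwF) (min'_subset _ hAF)
        rw [dif_pos ⟨w, hwF⟩, dif_pos hI]
        dsimp only
        rw [hmin, ih (s + 1) (by omega)]
        · exact (inter_subset_inter_left (subset_insert _ _)).trans hIF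
        · exact (inter_subset_inter_left (erase_subset _ _)).trans hFI
      · rw [dif_neg hI, dif_neg fun h => hI (h.mono hAF)]

lemma card_inter_deletionSet_self_le {ε : ℝ} {I : Finset V} (s : ℕ) (T : Finset V)
    {H : Finset (Finset V)} (hI : ∀ e ∈ H, ¬e ⊆ I) :
    #(I ∩ deletionSet ε s T H I) ≤ s - 1 := by
  induction s using Nat.strong_induction_on generalizing T H with
  | _ s ih =>
    match s with
    | 0 => simp [deletionSet]
    | 1 =>
      have : I ∩ deletionSet ε 1 T H I = ∅ := eq_empty_of_forall_notMem fun x hx =>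
        hI _ (mem_filter.mp (mem_of_mem_inter_right hx)).2
          (singleton_subset_iff.mpr (mem_of_mem_inter_left hx))
      simp [this]
    | s + 2 =>
      rw [deletionSet]
      split_ifs with h
      · have hw := (heavyVertices ε (s + 1) T H ∩ I).min'_mem h
        rw [inter_insert_of_mem (mem_of_mem_inter_right hw)]
        refine (card_insert_le _ _).trans ?_
        have := ih (s + 1) (by omega) (T.erase ((heavyVertices ε (s + 1) T H ∩ I).min' h))
          (not_subset_of_mem_memberSubfamily hI (mem_of_mem_inter_right hw))
        omega
      · have : I ∩ heavyVertices ε (s + 1) T H = ∅ := eq_empty_of_forall_notMem fun x hx =>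
          h ⟨x, mem_inter.mpr ⟨mem_of_mem_inter_right hx, mem_of_mem_inter_left hx⟩⟩
        simp [this]

variable (u r : ℕ) (ε : ℝ) (G : Finset (Finset V))

noncomputable def pivots (S : Finset V) : Finset V :=
  {v ∈ S | ε * ((#S : ℝ) - 1) ^ (r - 1) ≤ hypDegreeOn G S v}

noncomputable def linkDeletionSet (S : Finset V) (v : V) (F : Finset V) : Finset V :=
  deletionSet ε (r - 1) (S.erase v) ({e ∈ G | e ⊆ S}.memberSubfamily v) F

noncomputable def container (S F : Finset V) : Finset V :=
  if h : u < #S ∧ (pivots r ε G S).Nonempty then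
    let v := (pivots r ε G S).min' h.2
    if v ∈ F then container (S \ insert v (linkDeletionSet r ε G S v F)) F
    else container (S.erase v) F
  else S
termination_by #S
decreasing_by
  all_goals
    have hv : (pivots r ε G S).min' h.2 ∈ S := filter_subset _ _ (min'_mem _ _)
  · exact card_lt_card (sdiff_insert_ssubset hv)
  · exact card_lt_card (erase_ssubset hv)

variable {u r ε G}

lemma container_eq_self {S : Finset V} (h : ¬(u < #S ∧ (pivots r ε G S).Nonempty))
    (F : Finset V) : container u r ε G S F = S := by
  rw [container, dif_neg h]

lemma container_eq_of_pivot_mem {S F : Finset V} (h : u < #S ∧ (pivots r ε G S).Nonempty)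
    (hF : (pivots r ε G S).min' h.2 ∈ F) :
    container u r ε G S F = container u r ε G (S \ insert ((pivots r ε G S).min' h.2)
      (linkDeletionSet r ε G S ((pivots r ε G S).min' h.2) F)) F := by
  rw [container, dif_pos h]
  exact if_pos hF

lemma container_eq_of_pivot_notMem {S F : Finset V} (h : u < #S ∧ (pivots r ε G S).Nonempty)
    (hF : (pivots r ε G S).min' h.2 ∉ F) :
    container u r ε G S F = container u r ε G (S.erase ((pivots r ε G S).min' h.2)) F := by
  rw [container, dif_pos h]
  exact if_neg hF

lemma min'_pivots_mem {S : Finset V} (h : (pivots r ε G S).Nonempty) :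
    (pivots r ε G S).min' h ∈ S :=
  filter_subset _ _ (min'_mem _ _)

lemma container_subset (S F : Finset V) : container u r ε G S F ⊆ S := by
  induction S using Finset.strongInduction with
  | H S ih =>
    by_cases h : u < #S ∧ (pivots r ε G S).Nonempty
    · have hv := min'_pivots_mem h.2
      by_cases hvF : (pivots r ε G S).min' h.2 ∈ F
      · rw [container_eq_of_pivot_mem h hvF]
        exact (ih _ (sdiff_insert_ssubset hv)).trans sdiff_subset
      · rw [container_eq_of_pivot_notMem h hvF]
        exact (ih _ (erase_ssubset hv)).trans (erase_subset _ _)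
    · rw [container_eq_self h]

lemma card_container_le (hpivots : ∀ S : Finset V, u < #S → (pivots r ε G S).Nonempty)
    (S F : Finset V) : #(container u r ε G S F) ≤ u := by
  induction S using Finset.strongInduction with
  | H S ih =>
    by_cases h : u < #S ∧ (pivots r ε G S).Nonempty
    · have hv := min'_pivots_mem h.2
      by_cases hvF : (pivots r ε G S).min' h.2 ∈ F
      · rw [container_eq_of_pivot_mem h hvF]
        exact ih _ (sdiff_insert_ssubset hv)
      · rw [container_eq_of_pivot_notMem h hvF]
        exact ih _ (erase_ssubset hv)
    · rw [container_eq_self h]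
      by_contra hS
      exact h ⟨not_le.mp hS, hpivots S (not_le.mp hS)⟩

lemma container_eq_of_subset {I F : Finset V} (S : Finset V) (hFI : F ∩ S ⊆ I)
    (hIF : (I ∩ S) \ container u r ε G S I ⊆ F) :
    container u r ε G S F = container u r ε G S I := by
  induction S using Finset.strongInduction with
  | H S ih =>
    by_cases h : u < #S ∧ (pivots r ε G S).Nonempty
    · set v := (pivots r ε G S).min' h.2
      have hvS : v ∈ S := min'_pivots_mem h.2
      have hsub : ∀ S' ⊆ S, container u r ε G S' I = container u r ε G S I →
          (I ∩ S') \ container u r ε G S' I ⊆ F := fun S' hS' hC =>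
        (sdiff_subset_sdiff (inter_subset_inter_left hS') hC.ge).trans hIF
      by_cases hvI : v ∈ I
      · set R := linkDeletionSet r ε G S v I
        have hCI := container_eq_of_pivot_mem h hvI
        have hremoved : ∀ x ∈ I ∩ insert v R, x ∈ F := fun x hx => by
          obtain ⟨hxI, hxR⟩ := mem_inter.mp hx
          have hxS : x ∈ S := insert_subset hvS ((deletionSet_subset _ _ _ _ _).trans
            (erase_subset _ _)) hxR
          refine hIF (mem_sdiff.mpr ⟨mem_inter.mpr ⟨hxI, hxS⟩, fun hxC => ?_⟩)
          rw [hCI] at hxC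
          exact (mem_sdiff.mp (container_subset _ _ hxC)).2 hxR
        have hvF : v ∈ F := hremoved v (mem_inter.mpr ⟨hvI, mem_insert_self _ _⟩)
        have hR : linkDeletionSet r ε G S v F = R :=
          deletionSet_eq_of_subset _ _ _
            (fun x hx => hremoved x (inter_subset_inter_left (subset_insert _ _) hx))
            ((inter_subset_inter_left (erase_subset _ _)).trans hFI)
        rw [container_eq_of_pivot_mem h hvF, hCI, hR]
        exact ih _ (sdiff_insert_ssubset hvS) ((inter_subset_inter_left sdiff_subset).trans hFI)
          (hsub _ sdiff_subset hCI.symm)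
      · have hvF : v ∉ F := fun hvF => hvI (hFI (mem_inter.mpr ⟨hvF, hvS⟩))
        have hCI := container_eq_of_pivot_notMem h hvI
        rw [container_eq_of_pivot_notMem h hvF, hCI]
        exact ih _ (erase_ssubset hvS) ((inter_subset_inter_left (erase_subset _ _)).trans hFI)
          (hsub _ (erase_subset _ _) hCI.symm)
    · rw [container_eq_self h, container_eq_self h]

lemma card_sdiff_insert_deletionSet_le (hr : 2 ≤ r) (hε0 : 0 ≤ ε) (hε1 : ε ≤ 1)
    (hG : ∀ e ∈ G, #e = r) {S : Finset V} {v : V} (hv : v ∈ pivots r ε G S) (F : Finset V) :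
    (#(S \ insert v (linkDeletionSet r ε G S v F)) : ℝ) ≤
      (1 - ε) * #S := by
  obtain ⟨hvS, hdeg⟩ := mem_filter.mp hv
  set R := linkDeletionSet r ε G S v F
  have hGS : {e ∈ G | e ⊆ S} ⊆ S.powersetCard (r - 1 + 1) := fun e he => by
    obtain ⟨heG, heS⟩ := mem_filter.mp he
    exact mem_powersetCard.mpr ⟨heS, by rw [hG e heG]; omega⟩
  have hT : (#(S.erase v) : ℝ) = #S - 1 := by
    rw [card_erase_of_mem hvS, Nat.cast_sub (card_pos.mpr ⟨v, hvS⟩), Nat.cast_one]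
  have hR : ε * (#(S.erase v) : ℝ) ≤ #R :=
    le_card_deletionSet hε0 hε1 (by omega) F (memberSubfamily_subset_powersetCard hGS v)
      (by rwa [← hypDegreeOn_eq_card_memberSubfamily, hT])
  have hRS : insert v R ⊆ S :=
    insert_subset hvS ((deletionSet_subset _ _ _ _ _).trans (erase_subset _ _))
  have hvR : v ∉ R := fun h => notMem_erase v S (deletionSet_subset _ _ _ _ _ h)
  have hcard : (#(S \ insert v R) : ℝ) = #S - (#R + 1) := by
    rw [card_sdiff_of_subset hRS, Nat.cast_sub (card_le_card hRS), card_insert_of_notMem hvR,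
      Nat.cast_succ]
  rw [hcard]
  rw [hT] at hR
  linarith

lemma card_inter_sdiff_container_le (hr : 2 ≤ r) (hε0 : 0 ≤ ε) (hε1 : ε ≤ 1)
    (hG : ∀ e ∈ G, #e = r) {I : Finset V} (hI : ∀ e ∈ G, ¬e ⊆ I) (S : Finset V) {j : ℕ}
    (hj : (1 - ε) ^ j * #S ≤ u) : #((I ∩ S) \ container u r ε G S I) ≤ (r - 1) * j := by
  induction S using Finset.strongInduction generalizing j with
  | H S ih =>
    by_cases h : u < #S ∧ (pivots r ε G S).Nonempty
    · set v := (pivots r ε G S).min' h.2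
      have hvS : v ∈ S := min'_pivots_mem h.2
      by_cases hvI : v ∈ I
      · obtain ⟨j, rfl⟩ : ∃ j', j = j' + 1 := Nat.exists_eq_succ_of_ne_zero fun hj0 => by
          subst hj0
          rw [pow_zero, one_mul] at hj
          exact (Nat.cast_le.mp hj).not_gt h.1
        set R := linkDeletionSet r ε G S v I
        set S' := S \ insert v R
        have hS' : (1 - ε) ^ j * #S' ≤ u := by
          refine le_trans ?_ hj
          rw [pow_succ, mul_assoc]
          exact mul_le_mul_of_nonneg_left
            (card_sdiff_insert_deletionSet_le hr hε0 hε1 hG (min'_mem _ h.2) I)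
            (pow_nonneg (by linarith) _)
        have hR : #(I ∩ R) ≤ r - 2 := card_inter_deletionSet_self_le _ _
          (not_subset_of_mem_memberSubfamily (fun e he => hI e (mem_filter.mp he).1) hvI)
        have hrec := ih S' (sdiff_insert_ssubset hvS) hS'
        rw [container_eq_of_pivot_mem h hvI]
        calc #((I ∩ S) \ container u r ε G S' I)
            ≤ #(insert v ((I ∩ R) ∪ (I ∩ S') \ container u r ε G S' I)) := by
              refine card_le_card fun x => ?_
              simp only [S', mem_sdiff, mem_inter, mem_insert, mem_union]
              tauto
          _ ≤ 1 + (#(I ∩ R) + #((I ∩ S') \ container u r ε G S' I)) :=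
              (card_insert_le _ _).trans (by rw [add_comm]; gcongr; exact card_union_le _ _)
          _ ≤ (r - 1) * (j + 1) := by
              rw [mul_add_one]
              omega
      · rw [container_eq_of_pivot_notMem h hvI]
        have hIS : I ∩ S.erase v = I ∩ S := by
          rw [inter_erase, erase_eq_of_notMem fun h => hvI (mem_of_mem_inter_left h)]
        rw [← hIS]
        refine ih _ (erase_ssubset hvS) (le_trans ?_ hj)
        exact mul_le_mul_of_nonneg_left (by exact_mod_cast card_le_card (erase_subset _ _))
          (pow_nonneg (by linarith) _)
    · rw [container_eq_self h, sdiff_eq_empty_iff_subset.mpr inter_subset_right, card_empty]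
      exact Nat.zero_le _

end HypergraphContainer

lemma card_le_choose_mul_choose_of_fingerprint {α : Type*} [Fintype α] [DecidableEq α]
    {𝓘 : Finset (Finset α)} {C : Finset α → Finset α} {a k u : ℕ} (hC : ∀ F, #(C F) ≤ u)
    (h𝓘 : ∀ I ∈ 𝓘, #I = k ∧ ∃ F ⊆ I, #F = a ∧ I \ F ⊆ C F) :
    #𝓘 ≤ (Fintype.card α).choose a * u.choose (k - a) :=
  calc #𝓘 ≤ #((univ.powersetCard a).biUnion fun F => ((C F).powersetCard (k - a)).image (F ∪ ·)) :=
        card_le_card fun I hI => by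
          obtain ⟨hIk, F, hFI, hFa, hIFC⟩ := h𝓘 I hI
          refine mem_biUnion.mpr ⟨F, mem_powersetCard.mpr ⟨subset_univ _, hFa⟩, ?_⟩
          refine mem_image.mpr ⟨I \ F, mem_powersetCard.mpr ⟨hIFC, ?_⟩, union_sdiff_of_subset hFI⟩
          rw [card_sdiff_of_subset hFI, hIk, hFa]
    _ ≤ ∑ F ∈ univ.powersetCard a, #(((C F).powersetCard (k - a)).image (F ∪ ·)) :=
        card_biUnion_le
    _ ≤ ∑ _F ∈ univ.powersetCard a, u.choose (k - a) := sum_le_sum fun F _ =>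
        card_image_le.trans ((card_powersetCard _ _).trans_le (Nat.choose_le_choose _ (hC F)))
    _ = (Fintype.card α).choose a * u.choose (k - a) := by
        rw [sum_const, card_powersetCard, card_univ, smul_eq_mul]

theorem count_indep_sets_upper_bound_hypergraph_general
    (r ℓ k u n : ℕ) (hr : 2 ≤ r) (hk : (r - 1) * ℓ ≤ k)
    (ε : ℝ) (hε0 : 0 < ε) (hε1 : ε ≤ 1)
    (hun : (1 - ε) ^ ℓ * (n : ℝ) ≤ (u : ℝ))
    (V : Type) [Fintype V] (hV : Fintype.card V = n)
    (G : Finset (Finset V)) (hunif : ∀ e ∈ G, e.card = r)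
    (hdeg : ∀ S : Finset V, u < S.card →
      ∃ v ∈ S, ε * ((S.card : ℝ) - 1) ^ (r - 1) ≤ (hypDegreeOn G S v : ℝ)) :
    Nat.card {S : Finset V // S.card = k ∧ ∀ e ∈ G, ¬e ⊆ S} ≤
      n.choose ((r - 1) * ℓ) * u.choose (k - (r - 1) * ℓ) := by
  classical
  let _ : LinearOrder V := LinearOrder.lift' (Fintype.equivFin V) (Fintype.equivFin V).injective
  have hpivots (S : Finset V) (hS : u < #S) : (HypergraphContainer.pivots r ε G S).Nonempty :=
    let ⟨v, hv, hdv⟩ := hdeg S hS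
    ⟨v, mem_filter.mpr ⟨hv, hdv⟩⟩
  set C := HypergraphContainer.container u r ε G univ
  rw [Nat.card_eq_fintype_card, Fintype.card_subtype, ← hV]
  refine card_le_choose_mul_choose_of_fingerprint (C := C)
    (HypergraphContainer.card_container_le hpivots univ) fun I hI => ?_
  obtain ⟨hIk, hI⟩ := (mem_filter.mp hI).2
  have hF₀ : #(I \ C I) ≤ (r - 1) * ℓ := by
    simpa using HypergraphContainer.card_inter_sdiff_container_le hr hε0.le hε1 hunif hI univ
      (by rwa [card_univ, hV])
  obtain ⟨F, hF₀F, hFI, hFa⟩ := exists_subsuperset_card_eq sdiff_subset hF₀ (hIk ▸ hk)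
  refine ⟨hIk, F, hFI, hFa, ?_⟩
  have hCF : C F = C I :=
    HypergraphContainer.container_eq_of_subset univ (by simpa using hFI) (by simpa using hF₀F)
  rw [hCF]
  exact sdiff_le_comm.mp hF₀F

/-- Hypergraph container-type counting lemma: if in every vertex subset `S` of size more
than `u` some vertex has degree at least `ε·(|S|-1)^(r-1)` in `G[S]`, then the number of
independent sets of size `k` is at most `C(n,(r-1)ℓ)·C(u,k-(r-1)ℓ)`. -/
theorem count_indep_sets_upper_bound_hypergraph
    (r ℓ k u n : ℕ) (hr : 2 ≤ r) (hk : (r - 1) * ℓ ≤ k) (hu : 0 < u) (hn : 0 < n)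
    (ε : ℝ) (hε0 : 0 < ε) (hε1 : ε ≤ 1)
    (hun : (1 - ε) ^ ℓ * (n : ℝ) ≤ (u : ℝ))
    (V : Type) [Fintype V] (hV : Fintype.card V = n)
    (G : Finset (Finset V)) (hunif : ∀ e ∈ G, e.card = r)
    (hdeg : ∀ S : Finset V, u < S.card →
      ∃ v ∈ S, ε * ((S.card : ℝ) - 1) ^ (r - 1) ≤ (hypDegreeOn G S v : ℝ)) :
    Nat.card {S : Finset V // S.card = k ∧ ∀ e ∈ G, ¬e ⊆ S} ≤
      n.choose ((r - 1) * ℓ) * u.choose (k - (r - 1) * ℓ) :=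
  count_indep_sets_upper_bound_hypergraph_general r ℓ k u n hr hk ε hε0 hε1 hun V hV G hunif hdeg
end
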